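/- Let P_ε(x,ξ) = Σ_{|β|≤m} a_β^ε(x)ξ^β be a family of symbols of order m on an open set U ⊆ ℝⁿ, write b_m^ε(x) = Σ_{|α|=m} |a_α^ε(x)| and P_{ε,m}(x,ξ) = Σ_{|α|=m} a_α^ε(x)ξ^α, and let Γ ⊆ ℝⁿ∖{0} be an open cone. Assume that for every compact K ⊂ U: (st_1) there exist slow-scale nets (s_ε), (r_ε) and ε₀ > 0 with |P_{ε,m}(x,ξ)| ≥ (1/s_ε) b_m^ε(x) (1+|ξ|)^m for all (x,ξ) ∈ K×Γ with |ξ| ≥ r_ε and 0 < ε < ε₀; and (st_2) for every multi-index γ there exist slow-scale nets (s_ε^γ), (r_ε^γ) and ε_γ > 0 such that |∂_x^γ a_β^ε(x)| ≤ s_ε^γ b_m^ε(x) for all β with |β| ≤ m, all x ∈ K and 0 < ε < ε_γ. Then condition (mh_2) holds with δ = 0 and ρ = 1: for every compact K ⊂ U and every multi-index α there exist slow-scale nets (s'_ε), (r'_ε) and ε' > 0 such that for all β with |β| ≤ m: |∂_x^α ∂_ξ^β P_ε(x,ξ)| ≤ s'_ε |P_ε(x,ξ)| (1+|ξ|)^{−|β|}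 for all (x,ξ) ∈ K×Γ with |ξ| ≥ r'_ε and 0 < ε < ε'. -/

import Mathlib

open scoped BigOperators Classical
noncomputable section

abbrev Rn (n : ℕ) : Type := EuclideanSpace ℝ (Fin n)

/-- A net of positive reals (indexed by ε ∈ (0,1]) is of slow scale. -/
def SlowScale (r : ℝ → ℝ) : Prop :=
  (∀ ε ∈ Set.Ioc (0:ℝ) 1, 0 < r ε) ∧
  ∀ p : ℝ, 0 < p → ∃ C > (0:ℝ), ∃ ε₁ ∈ Set.Ioo (0:ℝ) 1,
    ∀ ε ∈ Set.Ioo (0:ℝ) ε₁, r ε ^ p ≤ C / ε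

/-- Γ is a cone: stable under positive dilation. -/
def IsCone {n : ℕ} (Γ : Set (Rn n)) : Prop :=
  ∀ ξ ∈ Γ, ∀ t : ℝ, 0 < t → t • ξ ∈ Γ

/-- first-order partial derivative in direction i -/
def pd1 {n : ℕ} (i : Fin n) (f : Rn n → ℂ) : Rn n → ℂ :=
  fun x => fderiv ℝ f x (EuclideanSpace.single i 1)

/-- multi-index partial derivative ∂^α -/
def pd {n : ℕ} (α : Fin n → ℕ) (f : Rn n → ℂ) : Rn n → ℂ :=
  (((List.finRange n).map fun i => (pd1 i)^[α i]).foldr (· ∘ ·) id) f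

/-- |α| -/
def mdeg {n : ℕ} (α : Fin n → ℕ) : ℕ := ∑ i, α i

/-- α! as a complex number -/
def mfactC {n : ℕ} (α : Fin n → ℕ) : ℂ := ((∏ i, Nat.factorial (α i) : ℕ) : ℂ)

/-- ξ^α -/
def mpow {n : ℕ} (ξ : Rn n) (α : Fin n → ℕ) : ℂ := ∏ i, ((ξ i : ℝ) : ℂ) ^ α i

/-- the finite set of multi-indices of length ≤ m -/
def midx (n m : ℕ) : Finset (Fin n → ℕ) :=
  (Finset.Icc (fun _ => 0) (fun _ => m)).filter fun σ => mdeg σ ≤ m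

/-- ∂_x^α of a symbol P(x,ξ) -/
def pdx {n : ℕ} (α : Fin n → ℕ) (P : Rn n → Rn n → ℂ) : Rn n → Rn n → ℂ :=
  fun x ξ => pd α (fun y => P y ξ) x

/-- ∂_ξ^β of a symbol P(x,ξ) -/
def pdxi {n : ℕ} (β : Fin n → ℕ) (P : Rn n → Rn n → ℂ) : Rn n → Rn n → ℂ :=
  fun x ξ => pd β (fun η => P x η) ξ

/-- ξ·x as a complex number -/
def edotC {n : ℕ} (ξ x : Rn n) : ℂ := ((∑ i, ξ i * x i : ℝ) : ℂ)

/-- the symbol P_ε(x,ξ) = Σ_{|σ|≤m} a_σ^ε(x) ξ^σ -/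
def Psym {n : ℕ} (m : ℕ) (a : (Fin n → ℕ) → ℝ → Rn n → ℂ) (ε : ℝ) : Rn n → Rn n → ℂ :=
  fun x ξ => ∑ σ ∈ midx n m, a σ ε x * mpow ξ σ

/-- the action P_ε(x,D)u = Σ_{|σ|≤m} a_σ^ε(x) D^σ u, D^σ = (-i)^{|σ|} ∂^σ -/
def PDOapply {n : ℕ} (m : ℕ) (a : (Fin n → ℕ) → ℝ → Rn n → ℂ) (ε : ℝ)
    (u : Rn n → ℂ) : Rn n → ℂ :=
  fun x => ∑ σ ∈ midx n m, a σ ε x * ((-Complex.I) ^ mdeg σ * pd σ u x)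

/-- moderate net of smooth functions on Ω -/
def Moderate {n : ℕ} (Ω : Set (Rn n)) (u : ℝ → Rn n → ℂ) : Prop :=
  (∀ ε ∈ Set.Ioc (0:ℝ) 1, ContDiffOn ℝ (⊤ : ℕ∞) (u ε) Ω) ∧
  ∀ K : Set (Rn n), IsCompact K → K ⊆ Ω → ∀ α : Fin n → ℕ,
    ∃ N : ℕ, ∃ C > (0:ℝ), ∃ ε₀ ∈ Set.Ioo (0:ℝ) 1,
      ∀ ε ∈ Set.Ioo (0:ℝ) ε₀, ∀ x ∈ K, ‖pd α (u ε) x‖ ≤ C / ε ^ N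

/-- G^∞-regular net on Ω (ε-growth uniform in the derivative order) -/
def GInfReg {n : ℕ} (Ω : Set (Rn n)) (u : ℝ → Rn n → ℂ) : Prop :=
  ∀ K : Set (Rn n), IsCompact K → K ⊆ Ω → ∃ N : ℕ, ∀ α : Fin n → ℕ,
    ∃ C > (0:ℝ), ∃ ε₀ ∈ Set.Ioo (0:ℝ) 1, ∀ ε ∈ Set.Ioo (0:ℝ) ε₀, ∀ x ∈ K,
      ‖pd α (u ε) x‖ ≤ C / ε ^ N

/-- rapidly decreasing of moderate type in the cone Γ -/
def RapDecMod {n : ℕ} (Γ : Set (Rn n)) (h : ℝ → Rn n → ℂ) : Prop :=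
  ∃ M : ℕ, ∀ l : ℕ, ∃ C > (0:ℝ), ∃ ε₀ ∈ Set.Ioo (0:ℝ) 1, ∃ r : ℝ → ℝ, SlowScale r ∧
    ∀ ε ∈ Set.Ioo (0:ℝ) ε₀, ∀ ξ ∈ Γ, r ε ≤ ‖ξ‖ →
      ‖h ε ξ‖ ≤ C / (ε ^ M * (1 + ‖ξ‖) ^ l)

/-- Fourier transform F(g)(ξ) = ∫ g(x) e^{-iξ·x} dx -/
def FT {n : ℕ} (g : Rn n → ℂ) (ξ : Rn n) : ℂ :=
  ∫ x : Rn n, g x * Complex.exp (-Complex.I * edotC ξ x)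

/-- symbol of the transposed operator, via the expansion
    ᵗP(x,η) = Σ_{|σ|≤m} ((-1)^{|σ|}/σ!) (∂_ξ^σ ∂_x^σ P)(x,-η) -/
def tsymb {n : ℕ} (m : ℕ) (P : Rn n → Rn n → ℂ) (x η : Rn n) : ℂ :=
  ∑ σ ∈ midx n m, ((-1 : ℂ) ^ mdeg σ / mfactC σ) * pdx σ (pdxi σ P) x (-η)

/-- coefficients r_β(x,ξ) of the operator R(ξ;x,D) from the algebraic lemma,
    for general symbols A and Q -/
def rGen {n : ℕ} (m : ℕ) (A Q : Rn n → Rn n → ℂ) (β : Fin n → ℕ) (x ξ : Rn n) : ℂ :=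
  if β = (fun _ => 0) then
    (Q x (-ξ) - A x ξ) / A x ξ +
      ∑ γ ∈ (midx n m).filter (fun γ => 1 ≤ mdeg γ),
        (mfactC γ)⁻¹ * pdxi γ (fun x' ξ' => Q x' (-ξ')) x ξ *
          ((-Complex.I) ^ mdeg γ * pdx γ (fun x' ξ' => (A x' ξ')⁻¹) x ξ)
  else
    ∑ γ ∈ midx n (m - mdeg β),
      (mfactC β * mfactC γ)⁻¹ *
        pdxi (fun i => β i + γ i) (fun x' ξ' => Q x' (-ξ')) x ξ *
          ((-Complex.I) ^ mdeg γ * pdx γ (fun x' ξ' => (A x' ξ')⁻¹) x ξ)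

/-- the operator R(ξ;x,D)w = -Σ_{|β|≤m} r_β(x,ξ) D_x^β w -/
def RopGen {n : ℕ} (m : ℕ) (A Q : Rn n → Rn n → ℂ) (ξ : Rn n) (w : Rn n → ℂ) : Rn n → ℂ :=
  fun x => -∑ β ∈ midx n m, rGen m A Q β x ξ * ((-Complex.I) ^ mdeg β * pd β w x)

/-- coefficients of R_ε with A = P_ε, Q = ᵗP_ε -/
def RcoefT {n : ℕ} (m : ℕ) (P : Rn n → Rn n → ℂ) : (Fin n → ℕ) → Rn n → Rn n → ℂ :=
  rGen m P (tsymb m P)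

/-- the operator R_ε(ξ;x,D) with A = P_ε, Q = ᵗP_ε -/
def RopT {n : ℕ} (m : ℕ) (P : Rn n → Rn n → ℂ) (ξ : Rn n) : (Rn n → ℂ) → Rn n → ℂ :=
  RopGen m P (tsymb m P) ξ

/-- condition (mh_1) with explicit exponent q -/
def MH1w {n : ℕ} (P : ℝ → Rn n → Rn n → ℂ) (K Γ : Set (Rn n)) (m₀ q : ℝ) : Prop :=
  ∃ r : ℝ → ℝ, SlowScale r ∧ ∃ ε₀ > (0:ℝ), ∀ ε ∈ Set.Ioo (0:ℝ) ε₀,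
    ∀ x ∈ K, ∀ ξ ∈ Γ, r ε ≤ ‖ξ‖ → ε ^ q * (1 + ‖ξ‖) ^ m₀ ≤ ‖P ε x ξ‖

/-- condition (mh_1) -/
def MH1 {n : ℕ} (P : ℝ → Rn n → Rn n → ℂ) (K Γ : Set (Rn n)) (m₀ : ℝ) : Prop :=
  ∃ q > (0:ℝ), MH1w P K Γ m₀ q

/-- condition (mh_2) -/
def MH2 {n : ℕ} (m : ℕ) (P : ℝ → Rn n → Rn n → ℂ) (K Γ : Set (Rn n)) (δ ρ : ℝ) : Prop :=
  ∀ α : Fin n → ℕ, ∃ s : ℝ → ℝ, SlowScale s ∧ ∃ r : ℝ → ℝ, SlowScale r ∧ ∃ ε₁ > (0:ℝ),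
    ∀ β : Fin n → ℕ, mdeg β ≤ m → ∀ ε ∈ Set.Ioo (0:ℝ) ε₁, ∀ x ∈ K, ∀ ξ ∈ Γ, r ε ≤ ‖ξ‖ →
      ‖pdx α (pdxi β (P ε)) x ξ‖ ≤
        s ε * ‖P ε x ξ‖ * (1 + ‖ξ‖) ^ (δ * (mdeg α : ℝ) - ρ * (mdeg β : ℝ))

/-- b_m^ε(x) = Σ_{|α|=m} |a_α^ε(x)| -/
def bprin {n : ℕ} (m : ℕ) (a : (Fin n → ℕ) → ℝ → Rn n → ℂ) (ε : ℝ) (x : Rn n) : ℝ :=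
  ∑ σ ∈ (midx n m).filter (fun σ => mdeg σ = m), ‖a σ ε x‖

/-- principal symbol P_{ε,m}(x,ξ) = Σ_{|α|=m} a_α^ε(x) ξ^α -/
def Pprin {n : ℕ} (m : ℕ) (a : (Fin n → ℕ) → ℝ → Rn n → ℂ) (ε : ℝ) (x ξ : Rn n) : ℂ :=
  ∑ σ ∈ (midx n m).filter (fun σ => mdeg σ = m), a σ ε x * mpow ξ σ

/-- condition (st_1) on K × Γ -/
def ST1 {n : ℕ} (m : ℕ) (a : (Fin n → ℕ) → ℝ → Rn n → ℂ) (K Γ : Set (Rn n)) : Prop :=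
  ∃ s : ℝ → ℝ, SlowScale s ∧ ∃ r : ℝ → ℝ, SlowScale r ∧ ∃ ε₀ > (0:ℝ),
    ∀ ε ∈ Set.Ioo (0:ℝ) ε₀, ∀ x ∈ K, ∀ ξ ∈ Γ, r ε ≤ ‖ξ‖ →
      (s ε)⁻¹ * bprin m a ε x * (1 + ‖ξ‖) ^ m ≤ ‖Pprin m a ε x ξ‖

/-- condition (st_2) on K -/
def ST2 {n : ℕ} (m : ℕ) (a : (Fin n → ℕ) → ℝ → Rn n → ℂ) (K : Set (Rn n)) : Prop :=
  ∀ γ : Fin n → ℕ, ∃ s : ℝ → ℝ, SlowScale s ∧ ∃ r : ℝ → ℝ, SlowScale r ∧ ∃ ε₁ > (0:ℝ),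
    ∀ β ∈ midx n m, ∀ ε ∈ Set.Ioo (0:ℝ) ε₁, ∀ x ∈ K,
      ‖pd γ (a β ε) x‖ ≤ s ε * bprin m a ε x

/-- slow-scale growth in each derivative on compact sets -/
def SlowScaleReg {n : ℕ} (Ω : Set (Rn n)) (u : ℝ → Rn n → ℂ) : Prop :=
  (∀ ε ∈ Set.Ioc (0:ℝ) 1, ContDiffOn ℝ (⊤ : ℕ∞) (u ε) Ω) ∧
  ∀ K : Set (Rn n), IsCompact K → K ⊆ Ω → ∀ α : Fin n → ℕ,
    ∃ s : ℝ → ℝ, SlowScale s ∧ ∃ ε₀ > (0:ℝ), ∀ ε ∈ Set.Ioo (0:ℝ) ε₀, ∀ x ∈ K,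
      ‖pd α (u ε) x‖ ≤ s ε

/-- first-order symbol Σ_j a_j^ε(x) ξ_j + a_0^ε(x) -/
def P1sym {n : ℕ} (aj : Fin n → ℝ → Rn n → ℂ) (a0 : ℝ → Rn n → ℂ) (ε : ℝ) :
    Rn n → Rn n → ℂ :=
  fun x ξ => (∑ j, aj j ε x * ((ξ j : ℝ) : ℂ)) + a0 ε x

/-- first-order operator action Σ_j a_j^ε(x) D_j u + a_0^ε(x) u -/
def P1apply {n : ℕ} (aj : Fin n → ℝ → Rn n → ℂ) (a0 : ℝ → Rn n → ℂ) (ε : ℝ)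
    (u : Rn n → ℂ) : Rn n → ℂ :=
  fun x => (∑ j, aj j ε x * (-Complex.I * pd1 j u x)) + a0 ε x * u x


/- ## SlowScale lemmas -/

lemma auxSS_const {c : ℝ} (hc : 0 < c) : SlowScale (fun _ => c) := by
  refine ⟨fun ε _ => hc, fun p hp => ⟨c ^ p, Real.rpow_pos_of_pos hc p, 1/2, by norm_num,
    fun ε hε => ?_⟩⟩
  rw [le_div_iff₀ hε.1]
  calc c ^ p * ε ≤ c ^ p * 1 := by
        apply mul_le_mul_of_nonneg_left _ (le_of_lt (Real.rpow_pos_of_pos hc p))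
        linarith [hε.2]
    _ = c ^ p := mul_one _

lemma auxSS_mul {r s : ℝ → ℝ} (hr : SlowScale r) (hs : SlowScale s) :
    SlowScale (fun ε => r ε * s ε) := by
  refine ⟨fun ε hε => mul_pos (hr.1 ε hε) (hs.1 ε hε), fun p hp => ?_⟩
  obtain ⟨C1, hC1, ε1, hε1, h1⟩ := hr.2 (2*p) (by linarith)
  obtain ⟨C2, hC2, ε2, hε2, h2⟩ := hs.2 (2*p) (by linarith)
  refine ⟨(C1 + C2)/2, by linarith, min ε1 ε2,
    ⟨lt_min hε1.1 hε2.1, lt_of_le_of_lt (min_le_left _ _) hε1.2⟩, fun ε hε => ?_⟩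
  have hεi : ε ∈ Set.Ioc (0:ℝ) 1 :=
    ⟨hε.1, le_of_lt (lt_trans (lt_of_lt_of_le hε.2 (min_le_left _ _)) hε1.2)⟩
  have hrp := hr.1 ε hεi
  have hsp := hs.1 ε hεi
  have h1' := h1 ε ⟨hε.1, lt_of_lt_of_le hε.2 (min_le_left _ _)⟩
  have h2' := h2 ε ⟨hε.1, lt_of_lt_of_le hε.2 (min_le_right _ _)⟩
  have e1 : r ε ^ p * (r ε ^ p) = r ε ^ (2*p) := by
    rw [← Real.rpow_add hrp]; ring_nf
  have e2 : s ε ^ p * (s ε ^ p) = s ε ^ (2*p) := by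
    rw [← Real.rpow_add hsp]; ring_nf
  have hmr : (r ε * s ε) ^ p = r ε ^ p * s ε ^ p :=
    Real.mul_rpow (le_of_lt hrp) (le_of_lt hsp)
  rw [hmr]
  have key : r ε ^ p * s ε ^ p ≤ (r ε ^ (2*p) + s ε ^ (2*p)) / 2 := by
    nlinarith [sq_nonneg (r ε ^ p - s ε ^ p), sq (r ε ^ p), e1, e2]
  calc r ε ^ p * s ε ^ p ≤ (r ε ^ (2*p) + s ε ^ (2*p)) / 2 := key
    _ ≤ (C1/ε + C2/ε) / 2 := by linarith
    _ = ((C1 + C2)/2) / ε := by rw [← add_div]; ring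

lemma auxSS_max {r s : ℝ → ℝ} (hr : SlowScale r) (hs : SlowScale s) :
    SlowScale (fun ε => max (r ε) (s ε)) := by
  refine ⟨fun ε hε => lt_max_of_lt_left (hr.1 ε hε), fun p hp => ?_⟩
  obtain ⟨C1, hC1, ε1, hε1, h1⟩ := hr.2 p hp
  obtain ⟨C2, hC2, ε2, hε2, h2⟩ := hs.2 p hp
  refine ⟨C1 + C2, by linarith, min ε1 ε2,
    ⟨lt_min hε1.1 hε2.1, lt_of_le_of_lt (min_le_left _ _) hε1.2⟩, fun ε hε => ?_⟩
  have h1' := h1 ε ⟨hε.1, lt_of_lt_of_le hε.2 (min_le_left _ _)⟩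
  have h2' := h2 ε ⟨hε.1, lt_of_lt_of_le hε.2 (min_le_right _ _)⟩
  have hd1 : (0:ℝ) ≤ C2 / ε := le_of_lt (div_pos hC2 hε.1)
  have hd2 : (0:ℝ) ≤ C1 / ε := le_of_lt (div_pos hC1 hε.1)
  have : (C1 + C2)/ε = C1/ε + C2/ε := by rw [add_div]
  rw [this]
  show max (r ε) (s ε) ^ p ≤ C1/ε + C2/ε
  rcases le_total (r ε) (s ε) with h | h
  · rw [max_eq_right h]; linarith
  · rw [max_eq_left h]; linarith

/- ## pd calculus -/

lemma auxDiffAt {n : ℕ} {U : Set (Rn n)} (hU : IsOpen U) {f : Rn n → ℂ}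
    (hf : ContDiffOn ℝ (⊤:ℕ∞) f U) {x : Rn n} (hx : x ∈ U) : DifferentiableAt ℝ f x :=
  (hf.contDiffAt (hU.mem_nhds hx)).differentiableAt (by simp)

lemma auxPd1ContDiffOn {n : ℕ} {U : Set (Rn n)} (hU : IsOpen U) (i : Fin n) {f : Rn n → ℂ}
    (hf : ContDiffOn ℝ (⊤:ℕ∞) f U) : ContDiffOn ℝ (⊤:ℕ∞) (pd1 i f) U := by
  have h := hf.fderiv_of_isOpen (m := (⊤:ℕ∞)) hU (by simp)
  exact h.clm_apply contDiffOn_const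

lemma auxIterContDiffOn {n : ℕ} {U : Set (Rn n)} (hU : IsOpen U) (i : Fin n) (k : ℕ)
    {f : Rn n → ℂ} (hf : ContDiffOn ℝ (⊤:ℕ∞) f U) :
    ContDiffOn ℝ (⊤:ℕ∞) ((pd1 i)^[k] f) U := by
  induction k with
  | zero => simpa using hf
  | succ k ih => rw [Function.iterate_succ_apply']; exact auxPd1ContDiffOn hU i ih

lemma auxPd1CongrOn {n : ℕ} {U : Set (Rn n)} (hU : IsOpen U) (i : Fin n) {f g : Rn n → ℂ}
    (h : ∀ y ∈ U, f y = g y) {x : Rn n} (hx : x ∈ U) : pd1 i f x = pd1 i g x := by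
  unfold pd1
  rw [Filter.EventuallyEq.fderiv_eq (by filter_upwards [hU.mem_nhds hx] with y hy using h y hy)]

lemma auxPd1SumOn {n : ℕ} {U : Set (Rn n)} (hU : IsOpen U) (i : Fin n) {ι : Type*}
    {t : Finset ι} {f : ι → Rn n → ℂ} (c : ι → ℂ)
    (hf : ∀ σ ∈ t, ContDiffOn ℝ (⊤:ℕ∞) (f σ) U) {x : Rn n} (hx : x ∈ U) :
    pd1 i (fun y => ∑ σ ∈ t, c σ * f σ y) x = ∑ σ ∈ t, c σ * pd1 i (f σ) x := by
  unfold pd1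
  have hdiff : ∀ σ ∈ t, DifferentiableAt ℝ (fun y => c σ * f σ y) x := fun σ hσ =>
    (auxDiffAt hU (hf σ hσ) hx).const_mul (c σ)
  rw [fderiv_fun_sum hdiff, ContinuousLinearMap.sum_apply]
  refine Finset.sum_congr rfl fun σ hσ => ?_
  rw [fderiv_const_mul (auxDiffAt hU (hf σ hσ) hx) (c σ)]
  simp

lemma auxIterSumCongrOn {n : ℕ} {U : Set (Rn n)} (hU : IsOpen U) (i : Fin n) (k : ℕ)
    {ι : Type*} {t : Finset ι} {f : ι → Rn n → ℂ} {c : ι → ℂ} {g : Rn n → ℂ}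
    (hf : ∀ σ ∈ t, ContDiffOn ℝ (⊤:ℕ∞) (f σ) U)
    (hg : ∀ y ∈ U, g y = ∑ σ ∈ t, c σ * f σ y) :
    ∀ x ∈ U, (pd1 i)^[k] g x = ∑ σ ∈ t, c σ * (pd1 i)^[k] (f σ) x := by
  induction k with
  | zero => simpa using hg
  | succ k ih =>
    intro x hx
    rw [Function.iterate_succ_apply']
    have h1 : pd1 i ((pd1 i)^[k] g) x
        = pd1 i (fun y => ∑ σ ∈ t, c σ * (pd1 i)^[k] (f σ) y) x :=
      auxPd1CongrOn hU i ih hx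
    rw [h1, auxPd1SumOn hU i c (fun σ hσ => auxIterContDiffOn hU i k (hf σ hσ)) hx]
    refine Finset.sum_congr rfl fun σ _ => ?_
    rw [← Function.iterate_succ_apply' (pd1 i) k]

lemma auxFoldCons {n : ℕ} (i : Fin n) (t : List (Fin n)) (g : Fin n → (Rn n → ℂ) → Rn n → ℂ)
    (f : Rn n → ℂ) :
    (((i :: t).map g).foldr (· ∘ ·) id) f = g i (((t.map g).foldr (· ∘ ·) id) f) := rfl

lemma auxFoldContDiffOn {n : ℕ} {U : Set (Rn n)} (hU : IsOpen U) (β : Fin n → ℕ)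
    (l : List (Fin n)) {f : Rn n → ℂ} (hf : ContDiffOn ℝ (⊤:ℕ∞) f U) :
    ContDiffOn ℝ (⊤:ℕ∞) (((l.map fun i => (pd1 i)^[β i]).foldr (· ∘ ·) id) f) U := by
  induction l with
  | nil => simpa using hf
  | cons i t ih => rw [auxFoldCons]; exact auxIterContDiffOn hU i (β i) ih

lemma auxFoldSumOn {n : ℕ} {U : Set (Rn n)} (hU : IsOpen U) (β : Fin n → ℕ)
    (l : List (Fin n)) {ι : Type*} {t : Finset ι} {f : ι → Rn n → ℂ} (c : ι → ℂ)
    (hf : ∀ σ ∈ t, ContDiffOn ℝ (⊤:ℕ∞) (f σ) U) :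
    ∀ x ∈ U, (((l.map fun i => (pd1 i)^[β i]).foldr (· ∘ ·) id) (fun y => ∑ σ ∈ t, c σ * f σ y)) x
      = ∑ σ ∈ t, c σ * (((l.map fun i => (pd1 i)^[β i]).foldr (· ∘ ·) id) (f σ)) x := by
  induction l with
  | nil => intro x _; simp
  | cons i tl ih =>
    intro x hx
    rw [auxFoldCons]
    have := auxIterSumCongrOn hU i (β i)
      (f := fun σ => ((tl.map fun i => (pd1 i)^[β i]).foldr (· ∘ ·) id) (f σ)) (c := c)
      (fun σ hσ => auxFoldContDiffOn hU β tl (hf σ hσ)) ih x hx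
    rw [this]
    rfl

lemma auxPdSumOn {n : ℕ} {U : Set (Rn n)} (hU : IsOpen U) (β : Fin n → ℕ)
    {ι : Type*} {t : Finset ι} {f : ι → Rn n → ℂ} (c : ι → ℂ)
    (hf : ∀ σ ∈ t, ContDiffOn ℝ (⊤:ℕ∞) (f σ) U) :
    ∀ x ∈ U, pd β (fun y => ∑ σ ∈ t, c σ * f σ y) x = ∑ σ ∈ t, c σ * pd β (f σ) x :=
  auxFoldSumOn hU β (List.finRange n) c hf

lemma auxPdZero {n : ℕ} (f : Rn n → ℂ) : pd (fun _ => 0) f = f := by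
  unfold pd
  induction (List.finRange n) with
  | nil => rfl
  | cons i t ih => rw [auxFoldCons]; simpa using ih

lemma auxProjSingle {n : ℕ} (i j : Fin n) :
    (EuclideanSpace.proj j) (EuclideanSpace.single i (1:ℝ)) = if j = i then 1 else 0 := by
  have : (EuclideanSpace.proj j) (EuclideanSpace.single i (1:ℝ))
      = (EuclideanSpace.single i (1:ℝ)) j := rfl
  rw [this, EuclideanSpace.single_apply]

lemma auxMpowUpdate {n : ℕ} (ξ : Rn n) (σ : Fin n → ℕ) (i : Fin n) (k : ℕ) :
    mpow ξ (Function.update σ i k)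
      = ((ξ i : ℝ) : ℂ) ^ k * ∏ j ∈ Finset.univ.erase i, ((ξ j : ℝ) : ℂ) ^ σ j := by
  unfold mpow
  rw [← Finset.prod_erase_mul _ _ (Finset.mem_univ i), Function.update_self, mul_comm]
  congr 1
  exact Finset.prod_congr rfl fun j hj => by
    rw [Function.update_of_ne (Finset.ne_of_mem_erase hj)]

lemma auxMpowContDiff {n : ℕ} (σ : Fin n → ℕ) :
    ContDiff ℝ (⊤:ℕ∞) (fun ξ : Rn n => mpow ξ σ) := by
  unfold mpow
  apply contDiff_prod
  intro i _
  exact ((Complex.ofRealCLM.comp (EuclideanSpace.proj i)).contDiff).pow _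

lemma auxMpowHasFDerivAt {n : ℕ} (σ : Fin n → ℕ) (ξ : Rn n) :
    HasFDerivAt (fun η => mpow η σ)
      (∑ j : Fin n, (∏ k ∈ Finset.univ.erase j, ((ξ k : ℝ) : ℂ) ^ σ k) •
        (((σ j : ℂ) * ((ξ j : ℝ):ℂ) ^ (σ j - 1)) •
          (Complex.ofRealCLM.comp (EuclideanSpace.proj j)))) ξ := by
  have h : ∀ j ∈ Finset.univ, HasFDerivAt (fun η : Rn n => ((η j : ℝ) : ℂ) ^ σ j)
      (((σ j : ℂ) * ((ξ j : ℝ):ℂ) ^ (σ j - 1)) •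
        (Complex.ofRealCLM.comp (EuclideanSpace.proj j))) ξ := by
    intro j _
    exact (hasDerivAt_pow (σ j) _).comp_hasFDerivAt ξ
      ((Complex.ofRealCLM.comp (EuclideanSpace.proj j)).hasFDerivAt)
  exact HasFDerivAt.finset_prod h

lemma auxPd1Mpow {n : ℕ} (i : Fin n) (σ : Fin n → ℕ) (ξ : Rn n) :
    pd1 i (fun η => mpow η σ) ξ
      = (σ i : ℂ) * mpow ξ (Function.update σ i (σ i - 1)) := by
  have h := (auxMpowHasFDerivAt σ ξ).fderiv
  unfold pd1
  rw [h, ContinuousLinearMap.sum_apply]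
  have term : ∀ j : Fin n,
      ((∏ k ∈ Finset.univ.erase j, ((ξ k : ℝ) : ℂ) ^ σ k) •
        (((σ j : ℂ) * ((ξ j : ℝ):ℂ) ^ (σ j - 1)) •
          (Complex.ofRealCLM.comp (EuclideanSpace.proj j)))) (EuclideanSpace.single i 1)
      = if j = i then (∏ k ∈ Finset.univ.erase j, ((ξ k : ℝ) : ℂ) ^ σ k) *
          ((σ j : ℂ) * ((ξ j : ℝ):ℂ) ^ (σ j - 1)) else 0 := by
    intro j
    rw [ContinuousLinearMap.smul_apply, ContinuousLinearMap.smul_apply,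
      ContinuousLinearMap.comp_apply, auxProjSingle]
    by_cases hj : j = i <;> simp [hj]
  rw [Finset.sum_congr rfl (fun j _ => term j)]
  rw [Finset.sum_eq_single i]
  · rw [if_pos rfl, auxMpowUpdate]
    ring
  · intro j _ hj
    rw [if_neg hj]
  · intro h'; exact absurd (Finset.mem_univ i) h'

lemma auxPd1ConstMul {n : ℕ} (i : Fin n) (c : ℂ) {f : Rn n → ℂ} (x : Rn n)
    (hf : DifferentiableAt ℝ f x) :
    pd1 i (fun y => c * f y) x = c * pd1 i f x := by
  unfold pd1
  rw [fderiv_const_mul hf c]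
  simp

lemma auxIterPd1Mpow {n : ℕ} (i : Fin n) (k : ℕ) (c : ℂ) (σ : Fin n → ℕ) :
    (pd1 i)^[k] (fun ξ => c * mpow ξ σ)
      = fun ξ => (c * ((σ i).descFactorial k : ℂ)) * mpow ξ (Function.update σ i (σ i - k)) := by
  induction k with
  | zero =>
    simp only [Function.iterate_zero, id_eq, Nat.descFactorial_zero, Nat.cast_one, mul_one,
      Nat.sub_zero]
    funext ξ
    rw [Function.update_eq_self]
  | succ k ih =>
    rw [Function.iterate_succ_apply', ih]
    funext ξ
    rw [auxPd1ConstMul i _ ξ ((auxMpowContDiff _).differentiable (by simp) ξ)]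
    rw [auxPd1Mpow]
    rw [Function.update_idem, Function.update_self]
    rw [show σ i - k - 1 = σ i - (k+1) from by omega]
    rw [Nat.descFactorial_succ]
    push_cast
    ring

lemma auxFoldCons' {n : ℕ} (i : Fin n) (t : List (Fin n)) (g : Fin n → (Rn n → ℂ) → Rn n → ℂ)
    (f : Rn n → ℂ) :
    (((i :: t).map g).foldr (· ∘ ·) id) f = g i (((t.map g).foldr (· ∘ ·) id) f) := rfl

lemma auxFoldMpow {n : ℕ} (β : Fin n → ℕ) (l : List (Fin n)) (hl : l.Nodup) (c : ℂ)
    (σ : Fin n → ℕ) :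
    ((l.map fun i => (pd1 i)^[β i]).foldr (· ∘ ·) id) (fun ξ => c * mpow ξ σ)
      = fun ξ => (c * ((∏ i ∈ l.toFinset, (σ i).descFactorial (β i) : ℕ) : ℂ)) *
          mpow ξ (fun j => if j ∈ l then σ j - β j else σ j) := by
  induction l with
  | nil =>
    funext ξ
    simp only [List.map_nil, List.foldr_nil, id_eq, List.toFinset_nil, Finset.prod_empty,
      Nat.cast_one, mul_one, List.not_mem_nil, if_false]
  | cons i t ih =>
    have hit : i ∉ t := (List.nodup_cons.mp hl).1
    have ht : t.Nodup := (List.nodup_cons.mp hl).2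
    rw [auxFoldCons', ih ht]
    set σt : Fin n → ℕ := fun j => if j ∈ t then σ j - β j else σ j with hσt
    have hσti : σt i = σ i := by simp [hσt, hit]
    rw [auxIterPd1Mpow i (β i) _ σt]
    funext ξ
    have harg : Function.update σt i (σt i - β i)
        = fun j => if j ∈ (i :: t) then σ j - β j else σ j := by
      funext j
      rcases eq_or_ne j i with rfl | hj
      · rw [Function.update_self, hσti]
        simp
      · rw [Function.update_of_ne hj]
        simp only [hσt, List.mem_cons, hj, false_or]
    rw [harg, hσti]
    have hcoef : ((i :: t).toFinset.prod fun j => (σ j).descFactorial (β j))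
        = (σ i).descFactorial (β i) * (t.toFinset.prod fun j => (σ j).descFactorial (β j)) := by
      rw [List.toFinset_cons, Finset.prod_insert (by simpa using hit)]
    rw [hcoef]
    push_cast
    ring

lemma auxPdMpow {n : ℕ} (β σ : Fin n → ℕ) :
    pd β (fun ξ => mpow ξ σ)
      = fun ξ => ((∏ i, (σ i).descFactorial (β i) : ℕ) : ℂ) * mpow ξ (fun j => σ j - β j) := by
  have h := auxFoldMpow β (List.finRange n) (List.nodup_finRange n) 1 σ
  unfold pd
  rw [show (fun ξ : Rn n => mpow ξ σ) = fun ξ => (1:ℂ) * mpow ξ σ from by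
    funext ξ; rw [one_mul]]
  rw [h]
  funext ξ
  simp [List.toFinset_finRange, List.mem_finRange]

lemma auxMemMidx {n m : ℕ} {σ : Fin n → ℕ} : σ ∈ midx n m ↔ mdeg σ ≤ m := by
  unfold midx
  rw [Finset.mem_filter, Finset.mem_Icc]
  constructor
  · exact fun h => h.2
  · intro h
    refine ⟨⟨fun i => Nat.zero_le _, fun i => le_trans ?_ h⟩, h⟩
    exact Finset.single_le_sum (f := σ) (fun j _ => Nat.zero_le _) (Finset.mem_univ i)

lemma auxCoordLe {n : ℕ} (ξ : Rn n) (i : Fin n) : |ξ i| ≤ ‖ξ‖ := by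
  rw [EuclideanSpace.norm_eq, ← Real.sqrt_sq_eq_abs]
  apply Real.sqrt_le_sqrt
  have : |ξ i| ^ 2 ≤ ∑ j, ‖ξ j‖ ^ 2 := by
    rw [sq_abs]
    have := Finset.single_le_sum (f := fun j => ‖ξ j‖^2) (fun j _ => sq_nonneg _)
      (Finset.mem_univ i)
    simpa [Real.norm_eq_abs, sq_abs] using this
  simpa [sq_abs] using this

lemma auxNormMpowLe {n : ℕ} (ξ : Rn n) (τ : Fin n → ℕ) :
    ‖mpow ξ τ‖ ≤ (1 + ‖ξ‖) ^ (mdeg τ) := by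
  unfold mpow mdeg
  rw [norm_prod, ← Finset.prod_pow_eq_pow_sum]
  apply Finset.prod_le_prod (fun i _ => norm_nonneg _)
  intro i _
  rw [norm_pow, Complex.norm_real, Real.norm_eq_abs]
  exact pow_le_pow_left₀ (abs_nonneg _)
    (le_trans (auxCoordLe ξ i) (by linarith [norm_nonneg ξ])) _

lemma auxMdegSub {n : ℕ} {β σ : Fin n → ℕ} (h : ∀ i, β i ≤ σ i) :
    mdeg (fun j => σ j - β j) + mdeg β = mdeg σ := by
  unfold mdeg
  rw [← Finset.sum_add_distrib]
  exact Finset.sum_congr rfl fun i _ => Nat.sub_add_cancel (h i)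

lemma auxCoefBound {n m : ℕ} {β σ : Fin n → ℕ} (hβ : mdeg β ≤ m) (hσ : mdeg σ ≤ m) :
    (∏ i, (σ i).descFactorial (β i)) ≤ (m+1)^m := by
  calc (∏ i, (σ i).descFactorial (β i)) ≤ ∏ i, (σ i)^(β i) :=
        Finset.prod_le_prod' fun i _ => Nat.descFactorial_le_pow _ _
    _ ≤ ∏ i, (m+1)^(β i) := by
        apply Finset.prod_le_prod' fun i _ => Nat.pow_le_pow_left ?_ _
        have : σ i ≤ mdeg σ :=
          Finset.single_le_sum (f := σ) (fun j _ => Nat.zero_le _) (Finset.mem_univ i)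
        omega
    _ = (m+1) ^ (mdeg β) := Finset.prod_pow_eq_pow_sum _ _ _
    _ ≤ (m+1) ^ m := Nat.pow_le_pow_right (by omega) hβ

/- ## Expansion of derivatives of Psym -/

lemma auxPdxiPsym {n m : ℕ} (a : (Fin n → ℕ) → ℝ → Rn n → ℂ) (ε : ℝ) (β : Fin n → ℕ)
    (x ξ : Rn n) :
    pdxi β (Psym m a ε) x ξ
      = ∑ σ ∈ midx n m, a σ ε x * (((∏ i, (σ i).descFactorial (β i) : ℕ) : ℂ)
          * mpow ξ (fun j => σ j - β j)) := by
  have h := auxPdSumOn (U := (Set.univ : Set (Rn n))) isOpen_univ β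
      (t := midx n m) (f := fun σ η => mpow η σ) (c := fun σ => a σ ε x)
      (fun σ _ => (auxMpowContDiff σ).contDiffOn) ξ (Set.mem_univ ξ)
  show pd β (fun η => ∑ σ ∈ midx n m, a σ ε x * mpow η σ) ξ = _
  rw [h]
  exact Finset.sum_congr rfl fun σ _ => by rw [auxPdMpow]

lemma auxPdxPdxiPsym {n m : ℕ} {U : Set (Rn n)} (hU : IsOpen U)
    (a : (Fin n → ℕ) → ℝ → Rn n → ℂ)
    (hasm : ∀ σ ∈ midx n m, ∀ ε ∈ Set.Ioc (0:ℝ) 1, ContDiffOn ℝ (⊤ : ℕ∞) (a σ ε) U)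
    {ε : ℝ} (hε : ε ∈ Set.Ioc (0:ℝ) 1) (α β : Fin n → ℕ) {x : Rn n} (hx : x ∈ U) (ξ : Rn n) :
    pdx α (pdxi β (Psym m a ε)) x ξ
      = ∑ σ ∈ midx n m, (((∏ i, (σ i).descFactorial (β i) : ℕ) : ℂ)
          * mpow ξ (fun j => σ j - β j)) * pd α (a σ ε) x := by
  have hfun : (fun y => pdxi β (Psym m a ε) y ξ)
      = fun y => ∑ σ ∈ midx n m, (((∏ i, (σ i).descFactorial (β i) : ℕ) : ℂ)
          * mpow ξ (fun j => σ j - β j)) * a σ ε y := by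
    funext y
    rw [auxPdxiPsym]
    exact Finset.sum_congr rfl fun σ _ => by ring
  show pd α (fun y => pdxi β (Psym m a ε) y ξ) x = _
  rw [hfun]
  exact auxPdSumOn hU α (t := midx n m) (f := fun σ => a σ ε)
    (c := fun σ => ((∏ i, (σ i).descFactorial (β i) : ℕ) : ℂ) * mpow ξ (fun j => σ j - β j))
    (fun σ hσ => (hasm σ hσ ε hε).of_le (by simp)) x hx


set_option maxHeartbeats 2000000 in
/-- Lemma 4.4 — (st_1) and (st_2) imply (mh_2) with δ = 0, ρ = 1. -/
theorem stmt10 {n m : ℕ} (U Γ : Set (Rn n)) (hU : IsOpen U)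
    (hΓo : IsOpen Γ) (hΓc : IsCone Γ) (hΓ0 : (0 : Rn n) ∉ Γ)
    (a : (Fin n → ℕ) → ℝ → Rn n → ℂ)
    (hasm : ∀ σ ∈ midx n m, ∀ ε ∈ Set.Ioc (0:ℝ) 1, ContDiffOn ℝ (⊤ : ℕ∞) (a σ ε) U)
    (hst1 : ∀ K : Set (Rn n), IsCompact K → K ⊆ U → ST1 m a K Γ)
    (hst2 : ∀ K : Set (Rn n), IsCompact K → K ⊆ U → ST2 m a K) :
    ∀ K : Set (Rn n), IsCompact K → K ⊆ U → MH2 m (fun ε => Psym m a ε) K Γ 0 1 := by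
  intro K hK hKU α
  obtain ⟨s1, hs1, r1, hr1, ε₁, hε₁, H1⟩ := hst1 K hK hKU
  obtain ⟨s2, hs2, r2, hr2, ε₂, hε₂, H2⟩ := hst2 K hK hKU (fun _ => 0)
  obtain ⟨s3, hs3, r3, hr3, ε₃, hε₃, H3⟩ := hst2 K hK hKU α
  set N : ℝ := ((midx n m).card : ℝ) + 1 with hNdef
  have hN0 : (0:ℝ) < N := by positivity
  have hcard : ((midx n m).card : ℝ) ≤ N := by simp [hNdef]
  set c₀ : ℝ := N * (((m+1)^m : ℕ) : ℝ) with hc₀def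
  have hpm : (0:ℝ) < (((m+1)^m : ℕ) : ℝ) := by positivity
  have hc₀ : (0:ℝ) < c₀ := mul_pos hN0 hpm
  refine ⟨fun ε => (2*c₀) * (s1 ε * s3 ε),
    auxSS_mul (auxSS_const (by linarith)) (auxSS_mul hs1 hs3),
    fun ε => max (r1 ε) ((2*N) * (s1 ε * s2 ε)),
    auxSS_max hr1 (auxSS_mul (auxSS_const (by linarith)) (auxSS_mul hs1 hs2)),
    min 1 (min ε₁ (min ε₂ ε₃)),
    lt_min one_pos (lt_min hε₁ (lt_min hε₂ hε₃)), ?_⟩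
  intro β hβ ε hε x hx ξ hξ hrξ
  have hε0 : 0 < ε := hε.1
  have hεlt : ε < min 1 (min ε₁ (min ε₂ ε₃)) := hε.2
  have hε1' : ε ∈ Set.Ioo (0:ℝ) ε₁ :=
    ⟨hε0, lt_of_lt_of_le hεlt (le_trans (min_le_right _ _) (min_le_left _ _))⟩
  have hε2' : ε ∈ Set.Ioo (0:ℝ) ε₂ :=
    ⟨hε0, lt_of_lt_of_le hεlt (le_trans (min_le_right _ _)
      (le_trans (min_le_right _ _) (min_le_left _ _)))⟩
  have hε3' : ε ∈ Set.Ioo (0:ℝ) ε₃ :=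
    ⟨hε0, lt_of_lt_of_le hεlt (le_trans (min_le_right _ _)
      (le_trans (min_le_right _ _) (min_le_right _ _)))⟩
  have hεIoc : ε ∈ Set.Ioc (0:ℝ) 1 := ⟨hε0, le_of_lt (lt_of_lt_of_le hεlt (min_le_left _ _))⟩
  have hs1p : 0 < s1 ε := hs1.1 ε hεIoc
  have hs2p : 0 < s2 ε := hs2.1 ε hεIoc
  have hs3p : 0 < s3 ε := hs3.1 ε hεIoc
  set A : ℝ := 1 + ‖ξ‖ with hAdef
  have hA1 : 1 ≤ A := by have := norm_nonneg ξ; simp only [hAdef]; linarith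
  have hA0 : (0:ℝ) < A := by linarith
  set b : ℝ := bprin m a ε x with hbdef
  have hb0 : 0 ≤ b := Finset.sum_nonneg fun σ _ => norm_nonneg _
  have hr1ξ : r1 ε ≤ ‖ξ‖ := le_trans (le_max_left _ _) hrξ
  have hr2ξ : (2*N) * (s1 ε * s2 ε) ≤ ‖ξ‖ := le_trans (le_max_right _ _) hrξ
  have hA2 : ∀ σ ∈ midx n m, ‖a σ ε x‖ ≤ s2 ε * b := by
    intro σ hσ
    have h := H2 σ hσ ε hε2' x hx
    rwa [auxPdZero] at h
  have hA3 : ∀ σ ∈ midx n m, ‖pd α (a σ ε) x‖ ≤ s3 ε * b :=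
    fun σ hσ => H3 σ hσ ε hε3' x hx
  set Tlow : Finset (Fin n → ℕ) := (midx n m).filter (fun σ => ¬ mdeg σ = m) with hTdef
  set Qv : ℂ := ∑ σ ∈ Tlow, a σ ε x * mpow ξ σ with hQdef
  have hdecomp : Psym m a ε x ξ = Pprin m a ε x ξ + Qv := by
    rw [hQdef, hTdef]
    show (∑ σ ∈ midx n m, a σ ε x * mpow ξ σ) = _
    exact (Finset.sum_filter_add_sum_filter_not (midx n m) (fun σ => mdeg σ = m)
      (fun σ => a σ ε x * mpow ξ σ)).symm
  have hQ : ‖Qv‖ * A ≤ N * (s2 ε * (b * A^m)) := by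
    have hterm' : ∀ σ ∈ Tlow, ‖a σ ε x * mpow ξ σ‖ * A ≤ s2 ε * (b * A^m) := by
      intro σ hσ
      rw [hTdef, Finset.mem_filter] at hσ
      have hσm : mdeg σ ≤ m := auxMemMidx.mp hσ.1
      have hlt : mdeg σ + 1 ≤ m := by
        have := hσ.2; omega
      have hn1 : ‖a σ ε x * mpow ξ σ‖ ≤ (s2 ε * b) * A^(mdeg σ) := by
        rw [norm_mul]
        exact mul_le_mul (hA2 σ hσ.1) (auxNormMpowLe ξ σ) (norm_nonneg _) (by positivity)
      calc ‖a σ ε x * mpow ξ σ‖ * A ≤ ((s2 ε * b) * A^(mdeg σ)) * A :=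
            mul_le_mul_of_nonneg_right hn1 hA0.le
        _ = (s2 ε * b) * A^(mdeg σ + 1) := by rw [pow_succ]; ring
        _ ≤ (s2 ε * b) * A^m :=
            mul_le_mul_of_nonneg_left (pow_le_pow_right₀ hA1 hlt) (by positivity)
        _ = s2 ε * (b * A^m) := by ring
    calc ‖Qv‖ * A ≤ (∑ σ ∈ Tlow, ‖a σ ε x * mpow ξ σ‖) * A := by
          rw [hQdef]
          exact mul_le_mul_of_nonneg_right (norm_sum_le _ _) hA0.le
      _ = ∑ σ ∈ Tlow, ‖a σ ε x * mpow ξ σ‖ * A := Finset.sum_mul _ _ _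
      _ ≤ ∑ _σ ∈ Tlow, s2 ε * (b * A^m) := Finset.sum_le_sum hterm'
      _ = (Tlow.card : ℝ) * (s2 ε * (b * A^m)) := by rw [Finset.sum_const, nsmul_eq_mul]
      _ ≤ N * (s2 ε * (b * A^m)) := by
          apply mul_le_mul_of_nonneg_right _ (by positivity)
          refine le_trans ?_ hcard
          exact_mod_cast Finset.card_filter_le _ _
  have hlow : b * A^m ≤ 2 * s1 ε * ‖Psym m a ε x ξ‖ := by
    have hPp : (s1 ε)⁻¹ * b * A^m ≤ ‖Pprin m a ε x ξ‖ := H1 ε hε1' x hx ξ hξ hr1ξ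
    have h5a : ‖Pprin m a ε x ξ‖ ≤ ‖Psym m a ε x ξ‖ + ‖Qv‖ := by
      have h' : Pprin m a ε x ξ = Psym m a ε x ξ - Qv := by rw [hdecomp]; ring
      rw [h']; exact norm_sub_le _ _
    have h5b : 2 * s1 ε * ‖Qv‖ ≤ b * A^m := by
      have hAge : (2*N) * (s1 ε * s2 ε) ≤ A := by
        have := norm_nonneg ξ; simp only [hAdef]; linarith
      have h1 : 2 * s1 ε * (‖Qv‖ * A) ≤ 2 * s1 ε * (N * (s2 ε * (b * A^m))) :=
        mul_le_mul_of_nonneg_left hQ (by positivity)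
      have h2 : 2 * s1 ε * (N * (s2 ε * (b * A^m))) = ((2*N) * (s1 ε * s2 ε)) * (b*A^m) := by
        ring
      have h3 : ((2*N) * (s1 ε * s2 ε)) * (b*A^m) ≤ A * (b*A^m) :=
        mul_le_mul_of_nonneg_right hAge (by positivity)
      have h4 : (2 * s1 ε * ‖Qv‖) * A ≤ (b*A^m) * A := by nlinarith
      exact le_of_mul_le_mul_right h4 hA0
    have e1 : 2 * s1 ε * ((s1 ε)⁻¹ * b * A^m) = 2 * (b * A^m) := by
      field_simp
    have l1 : 2*(b*A^m) ≤ 2*s1 ε*‖Pprin m a ε x ξ‖ := by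
      rw [← e1]
      exact mul_le_mul_of_nonneg_left hPp (by positivity)
    have l2 : 2*s1 ε*‖Pprin m a ε x ξ‖ ≤ 2*s1 ε*(‖Psym m a ε x ξ‖+‖Qv‖) :=
      mul_le_mul_of_nonneg_left h5a (by positivity)
    nlinarith
  have hexp := auxPdxPdxiPsym hU a hasm hεIoc α β (hKU hx) ξ
  have hterm : ∀ σ ∈ midx n m,
      ‖(((∏ i, (σ i).descFactorial (β i) : ℕ) : ℂ)
          * mpow ξ (fun j => σ j - β j)) * pd α (a σ ε) x‖ * A^(mdeg β)
        ≤ (((m+1)^m : ℕ) : ℝ) * (s3 ε * (b * A^m)) := by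
    intro σ hσ
    have hσm : mdeg σ ≤ m := auxMemMidx.mp hσ
    by_cases hcase : ∀ i, β i ≤ σ i
    · have hcoef : (((∏ i, (σ i).descFactorial (β i) : ℕ) : ℝ)) ≤ (((m+1)^m : ℕ) : ℝ) :=
        Nat.cast_le.mpr (auxCoefBound hβ hσm)
      have hms : mdeg (fun j => σ j - β j) + mdeg β = mdeg σ := auxMdegSub hcase
      have h1 : ‖(((∏ i, (σ i).descFactorial (β i) : ℕ) : ℂ)
          * mpow ξ (fun j => σ j - β j)) * pd α (a σ ε) x‖
          ≤ ((((m+1)^m : ℕ) : ℝ) * A^(mdeg (fun j => σ j - β j))) * (s3 ε * b) := by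
        rw [norm_mul, norm_mul, Complex.norm_natCast]
        exact mul_le_mul
          (mul_le_mul hcoef (auxNormMpowLe ξ _) (norm_nonneg _) (by positivity))
          (hA3 σ hσ) (norm_nonneg _) (by positivity)
      calc ‖(((∏ i, (σ i).descFactorial (β i) : ℕ) : ℂ)
            * mpow ξ (fun j => σ j - β j)) * pd α (a σ ε) x‖ * A^(mdeg β)
          ≤ (((((m+1)^m : ℕ) : ℝ) * A^(mdeg (fun j => σ j - β j))) * (s3 ε * b)) * A^(mdeg β) :=
            mul_le_mul_of_nonneg_right h1 (by positivity)
        _ = (((m+1)^m : ℕ) : ℝ) * (s3 ε * b) * A^(mdeg (fun j => σ j - β j) + mdeg β) := by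
            rw [pow_add]; ring
        _ = (((m+1)^m : ℕ) : ℝ) * (s3 ε * b) * A^(mdeg σ) := by rw [hms]
        _ ≤ (((m+1)^m : ℕ) : ℝ) * (s3 ε * b) * A^m :=
            mul_le_mul_of_nonneg_left (pow_le_pow_right₀ hA1 hσm) (by positivity)
        _ = (((m+1)^m : ℕ) : ℝ) * (s3 ε * (b * A^m)) := by ring
    · push_neg at hcase
      obtain ⟨i, hi⟩ := hcase
      have hz : (∏ i, (σ i).descFactorial (β i)) = 0 :=
        Finset.prod_eq_zero (Finset.mem_univ i) (Nat.descFactorial_eq_zero_iff_lt.mpr hi)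
      rw [hz]
      simp only [Nat.cast_zero, zero_mul, norm_zero]
      positivity
  have hup : ‖pdx α (pdxi β (Psym m a ε)) x ξ‖ * A^(mdeg β) ≤ c₀ * (s3 ε * (b * A^m)) := by
    rw [hexp]
    calc ‖∑ σ ∈ midx n m, (((∏ i, (σ i).descFactorial (β i) : ℕ) : ℂ)
            * mpow ξ (fun j => σ j - β j)) * pd α (a σ ε) x‖ * A^(mdeg β)
        ≤ (∑ σ ∈ midx n m, ‖(((∏ i, (σ i).descFactorial (β i) : ℕ) : ℂ)
            * mpow ξ (fun j => σ j - β j)) * pd α (a σ ε) x‖) * A^(mdeg β) :=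
          mul_le_mul_of_nonneg_right (norm_sum_le _ _) (by positivity)
      _ = ∑ σ ∈ midx n m, ‖(((∏ i, (σ i).descFactorial (β i) : ℕ) : ℂ)
            * mpow ξ (fun j => σ j - β j)) * pd α (a σ ε) x‖ * A^(mdeg β) :=
          Finset.sum_mul _ _ _
      _ ≤ ∑ _σ ∈ midx n m, (((m+1)^m : ℕ) : ℝ) * (s3 ε * (b * A^m)) :=
          Finset.sum_le_sum hterm
      _ = ((midx n m).card : ℝ) * ((((m+1)^m : ℕ) : ℝ) * (s3 ε * (b * A^m))) := by
          rw [Finset.sum_const, nsmul_eq_mul]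
      _ = (((midx n m).card : ℝ) * (((m+1)^m : ℕ) : ℝ)) * (s3 ε * (b * A^m)) := by ring
      _ ≤ (N * (((m+1)^m : ℕ) : ℝ)) * (s3 ε * (b * A^m)) := by
          apply mul_le_mul_of_nonneg_right _ (by positivity)
          exact mul_le_mul_of_nonneg_right hcard (by positivity)
      _ = c₀ * (s3 ε * (b * A^m)) := by rw [hc₀def]
  have hfin : ‖pdx α (pdxi β (Psym m a ε)) x ξ‖ * A^(mdeg β)
      ≤ ((2*c₀) * (s1 ε * s3 ε)) * ‖Psym m a ε x ξ‖ := by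
    calc ‖pdx α (pdxi β (Psym m a ε)) x ξ‖ * A^(mdeg β) ≤ c₀ * (s3 ε * (b * A^m)) := hup
      _ ≤ c₀ * (s3 ε * (2 * s1 ε * ‖Psym m a ε x ξ‖)) :=
          mul_le_mul_of_nonneg_left (mul_le_mul_of_nonneg_left hlow hs3p.le) hc₀.le
      _ = ((2*c₀) * (s1 ε * s3 ε)) * ‖Psym m a ε x ξ‖ := by ring
  show ‖pdx α (pdxi β (Psym m a ε)) x ξ‖
      ≤ ((2*c₀) * (s1 ε * s3 ε)) * ‖Psym m a ε x ξ‖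
        * (1 + ‖ξ‖) ^ ((0:ℝ) * (mdeg α : ℝ) - 1 * (mdeg β : ℝ))
  have hexpo : (0:ℝ) * (mdeg α : ℝ) - 1 * (mdeg β : ℝ) = -((mdeg β : ℕ) : ℝ) := by ring
  rw [hexpo, Real.rpow_neg (by linarith), Real.rpow_natCast, ← div_eq_mul_inv,
    le_div_iff₀ (by positivity)]
  exact hfin


end
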